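/- arXiv:0910.5655 — 2 statements merged into one kernel-verified Lean document; each statement's English description precedes it below -/
import Mathlib

section
/- (Stationarity of dual quantization.) Let X be a real random variable with P(X ∈ [a,b]) = 1 and let Λ be uniformly distributed on [0,1] and independent of X. Then for any grid Γ = (x_1, …, x_N) in [a,b], the conditional expectation of J_Γ(X,Λ) given X equals X almost surely: E(J_Γ(X,Λ) | X) = X. -/
open MeasureTheory ProbabilityTheory

/-- Index `j*(ξ)` of the segment `[x_j, x_{j+1})` of the grid containing `ξ`
(with default value `N`, corresponding to the closed last segment). -/
noncomputable def jstar (N : ℕ) (x : ℕ → ℝ) (ξ : ℝ) : ℕ :=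
  if h : ∃ j, j ≤ N ∧ x j ≤ ξ ∧ ξ < x (j + 1) then h.choose else N

/-- The dual quantization operator `J_Γ(ξ, λ)` associated with the grid
`x 0 ≤ x 1 ≤ … ≤ x (N+1)`. -/
noncomputable def dualQ (N : ℕ) (x : ℕ → ℝ) (ξ lam : ℝ) : ℝ :=
  if x (jstar N x ξ + 1) = x (jstar N x ξ) then ξ
  else if lam < (x (jstar N x ξ + 1) - ξ) / (x (jstar N x ξ + 1) - x (jstar N x ξ)) then
    x (jstar N x ξ)
  else x (jstar N x ξ + 1)

/-!
Given `ξ`, the operator `J_Γ(ξ, ·)` takes the two endpoints `x_j ≤ ξ ≤ x_{j+1}` of the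
segment containing `ξ`, the lower one exactly when `λ < (x_{j+1} - ξ)/(x_{j+1} - x_j)`; under
the uniform law its mean is therefore the convex combination of the endpoints that equals `ξ`.
Since `Λ` is independent of `X`, the conditional distribution of `Λ` given `X` is the uniform
law itself, so `E(J_Γ(X, Λ) | X)` is this mean evaluated at `X`.
-/

open Set

namespace ProbabilityTheory

variable {α β Ω : Type*} {mα : MeasurableSpace α} {mβ : MeasurableSpace β}
  [MeasurableSpace Ω] [StandardBorelSpace Ω] [Nonempty Ω] {μ : Measure α} [IsFiniteMeasure μ]
  {X : α → β} {Y : α → Ω}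

lemma IndepFun.condDistrib_ae_eq_const (hX : AEMeasurable X μ) (hY : AEMeasurable Y μ)
    (hXY : IndepFun X Y μ) : condDistrib Y X μ =ᵐ[μ.map X] Kernel.const β (μ.map Y) :=
  condDistrib_ae_eq_of_measure_eq_compProd X hY <| by
    rw [Measure.compProd_const]
    exact (indepFun_iff_map_prod_eq_prod_map_map hX hY).mp hXY

lemma IndepFun.condExp_prod_ae_eq_integral {F : Type*} [NormedAddCommGroup F] [NormedSpace ℝ F]
    [CompleteSpace F] {f : β × Ω → F} (hX : Measurable X) (hY : AEMeasurable Y μ)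
    (hXY : IndepFun X Y μ) (hf : StronglyMeasurable f)
    (hf_int : Integrable (fun a => f (X a, Y a)) μ) :
    μ[fun a => f (X a, Y a) | mβ.comap X] =ᵐ[μ] fun a => ∫ y, f (X a, y) ∂(μ.map Y) := by
  filter_upwards [condExp_prod_ae_eq_integral_condDistrib hX hY hf hf_int,
    ae_of_ae_map hX.aemeasurable (hXY.condDistrib_ae_eq_const hX.aemeasurable hY)] with a ha hXa
  rw [ha, hXa, Kernel.const_apply]

end ProbabilityTheory

lemma integral_uniform_ite_lt {t : ℝ} (ht₀ : 0 ≤ t) (ht₁ : t ≤ 1) (c d : ℝ) :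
    ∫ lam in Icc (0 : ℝ) 1, (if lam < t then c else d) = t * c + (1 - t) * d := by
  classical
  change ∫ lam in Icc (0 : ℝ) 1, (Iio t).piecewise (fun _ => c) (fun _ => d) lam = _
  rw [integral_piecewise measurableSet_Iio integrableOn_const integrableOn_const,
    setIntegral_const, setIntegral_const, measureReal_restrict_apply measurableSet_Iio,
    measureReal_restrict_apply measurableSet_Iio.compl, compl_Iio]
  have hlow : Iio t ∩ Icc 0 1 = Ico 0 t := by
    ext; simp only [mem_inter_iff, mem_Iio, mem_Icc, mem_Ico]; grind
  have hupp : Ici t ∩ Icc 0 1 = Icc t 1 := by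
    ext; simp only [mem_inter_iff, mem_Ici, mem_Icc]; grind
  simp [hlow, hupp, ht₀, ht₁]

section Grid

variable {N : ℕ} {x : ℕ → ℝ} {ξ : ℝ}

lemma jstar_le : jstar N x ξ ≤ N := by
  unfold jstar
  split_ifs with h
  exacts [h.choose_spec.1, le_rfl]

lemma jstar_bracket (h₀ : x 0 ≤ ξ) (hN : ξ ≤ x (N + 1)) :
    x (jstar N x ξ) ≤ ξ ∧ ξ ≤ x (jstar N x ξ + 1) := by
  unfold jstar
  split_ifs with h
  · exact ⟨h.choose_spec.2.1, h.choose_spec.2.2.le⟩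
  · push Not at h
    -- with no half-open segment containing `ξ`, the grid climbs below `ξ` all the way to `x N`
    have hbelow : ∀ j ≤ N, x j ≤ ξ := by
      intro j hj
      induction j with
      | zero => exact h₀
      | succ j ih => exact h j (by omega) (ih (by omega))
    exact ⟨hbelow N le_rfl, hN⟩

lemma jstar_eq_iff (hx : MonotoneOn x (Iic (N + 1))) (j : ℕ) :
    jstar N x ξ = j ↔ (j ≤ N ∧ x j ≤ ξ ∧ ξ < x (j + 1)) ∨
      (j = N ∧ ¬ ∃ k, k ≤ N ∧ x k ≤ ξ ∧ ξ < x (k + 1)) := by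
  have hle : ∀ k l, k ≤ N → l ≤ N → x k ≤ ξ → ξ < x (l + 1) → k ≤ l := by
    intro k l hk hl hxk hxl
    by_contra! hlk
    have := hx (mem_Iic.2 (by omega)) (mem_Iic.2 (by omega)) (Nat.succ_le_of_lt hlk)
    linarith
  unfold jstar
  split_ifs with h
  · obtain ⟨hk, hxk, hxk'⟩ := h.choose_spec
    constructor
    · rintro rfl; exact Or.inl h.choose_spec
    · rintro (⟨hj, hxj, hxj'⟩ | ⟨-, hne⟩)
      · exact le_antisymm (hle _ _ hk hj hxk hxj') (hle _ _ hj hk hxj hxk')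
      · exact absurd h hne
  · constructor
    · rintro rfl; exact Or.inr ⟨rfl, h⟩
    · rintro (hj | ⟨rfl, -⟩)
      · exact absurd ⟨j, hj⟩ h
      · rfl

lemma measurable_jstar (hx : MonotoneOn x (Iic (N + 1))) : Measurable (jstar N x) := by
  refine measurable_to_countable' fun j => ?_
  have hpre : jstar N x ⁻¹' {j} = {ξ | (j ≤ N ∧ x j ≤ ξ ∧ ξ < x (j + 1)) ∨
      (j = N ∧ ¬ ∃ k, k ≤ N ∧ x k ≤ ξ ∧ ξ < x (k + 1))} :=
    ext fun ξ => jstar_eq_iff hx j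
  rw [hpre]
  measurability

lemma measurable_dualQ (hx : MonotoneOn x (Iic (N + 1))) :
    Measurable fun p : ℝ × ℝ => dualQ N x p.1 p.2 := by
  have hj : Measurable fun p : ℝ × ℝ => jstar N x p.1 :=
    (measurable_jstar hx).comp measurable_fst
  have hl : Measurable fun p : ℝ × ℝ => x (jstar N x p.1) := measurable_from_nat.comp hj
  have hr : Measurable fun p : ℝ × ℝ => x (jstar N x p.1 + 1) :=
    measurable_from_nat.comp (hj.add_const 1)
  unfold dualQ
  exact Measurable.ite (measurableSet_eq_fun hr hl) measurable_fst <|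
    Measurable.ite (measurableSet_lt measurable_snd ((hr.sub measurable_fst).div (hr.sub hl)))
      hl hr

lemma dualQ_mem_Icc (hx : MonotoneOn x (Iic (N + 1))) (h₀ : x 0 ≤ ξ) (hN : ξ ≤ x (N + 1))
    (lam : ℝ) : dualQ N x ξ lam ∈ Icc (x 0) (x (N + 1)) := by
  obtain ⟨hl, hr⟩ := jstar_bracket h₀ hN
  have hjN : jstar N x ξ ≤ N := jstar_le
  have hlow : x 0 ≤ x (jstar N x ξ) :=
    hx (mem_Iic.2 (by omega)) (mem_Iic.2 (by omega)) (Nat.zero_le _)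
  have hupp : x (jstar N x ξ + 1) ≤ x (N + 1) :=
    hx (mem_Iic.2 (by omega)) (mem_Iic.2 le_rfl) (by omega)
  unfold dualQ
  split_ifs
  exacts [⟨h₀, hN⟩, ⟨hlow, hl.trans hN⟩, ⟨h₀.trans hr, hupp⟩]

lemma integral_dualQ_uniform (h₀ : x 0 ≤ ξ) (hN : ξ ≤ x (N + 1)) :
    ∫ lam in Icc (0 : ℝ) 1, dualQ N x ξ lam = ξ := by
  unfold dualQ
  obtain ⟨hl, hr⟩ := jstar_bracket h₀ hN
  set j := jstar N x ξ
  by_cases hdeg : x (j + 1) = x j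
  · simp [hdeg]
  have hpos : 0 < x (j + 1) - x j := sub_pos.2 (lt_of_le_of_ne (hl.trans hr) (Ne.symm hdeg))
  simp only [if_neg hdeg]
  rw [integral_uniform_ite_lt (div_nonneg (by linarith) hpos.le)
    ((div_le_one hpos).2 (by linarith))]
  field_simp
  ring

end Grid

theorem dualQ_stationary_general {Ω : Type*} [MeasurableSpace Ω] (P : Measure Ω) [IsProbabilityMeasure P]
    (a b : ℝ) (N : ℕ) (x : ℕ → ℝ)
    (hmono : ∀ j ≤ N, x j ≤ x (j + 1)) (hx0 : x 0 = a) (hxN : x (N + 1) = b)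
    (X : Ω → ℝ) (hXmeas : Measurable X) (hXab : ∀ᵐ ω ∂P, X ω ∈ Set.Icc a b)
    (Λ : Ω → ℝ) (hΛmeas : Measurable Λ)
    (hΛ : Measure.map Λ P = volume.restrict (Set.Icc (0 : ℝ) 1))
    (hindep : IndepFun X Λ P) :
    P[fun ω => dualQ N x (X ω) (Λ ω)|MeasurableSpace.comap X inferInstance] =ᵐ[P] X := by
  subst hx0 hxN
  have hx : MonotoneOn x (Iic (N + 1)) :=
    monotoneOn_of_le_add_one ordConnected_Iic fun j _ _ hj => hmono j (by simpa using hj)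
  have hJ_int : Integrable (fun ω => dualQ N x (X ω) (Λ ω)) P :=
    .of_bound ((measurable_dualQ hx).comp (hXmeas.prodMk hΛmeas)).aestronglyMeasurable
      (max |x 0| |x (N + 1)|) <| hXab.mono fun ω hω =>
        abs_le_max_abs_abs (dualQ_mem_Icc hx hω.1 hω.2 _).1 (dualQ_mem_Icc hx hω.1 hω.2 _).2
  filter_upwards [hindep.condExp_prod_ae_eq_integral hXmeas hΛmeas.aemeasurable
    (measurable_dualQ hx).stronglyMeasurable hJ_int, hXab] with ω hω hXω
  rw [hω, hΛ, integral_dualQ_uniform hXω.1 hXω.2]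

/-- **Stationarity of dual quantization.** Let `X` be a real random variable with
`P(X ∈ [a,b]) = 1` and let `Λ` be uniformly distributed on `[0,1]` and independent of `X`.
Then for any grid `Γ` in `[a,b]`, `E(J_Γ(X,Λ) | X) = X` almost surely. -/
theorem dualQ_stationary {Ω : Type*} [MeasurableSpace Ω] (P : Measure Ω) [IsProbabilityMeasure P]
    (a b : ℝ) (hab : a < b) (N : ℕ) (x : ℕ → ℝ)
    (hmono : ∀ j ≤ N, x j ≤ x (j + 1)) (hx0 : x 0 = a) (hxN : x (N + 1) = b)
    (X : Ω → ℝ) (hXmeas : Measurable X) (hXab : ∀ᵐ ω ∂P, X ω ∈ Set.Icc a b)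
    (Λ : Ω → ℝ) (hΛmeas : Measurable Λ)
    (hΛ : Measure.map Λ P = volume.restrict (Set.Icc (0 : ℝ) 1))
    (hindep : IndepFun X Λ P) :
    P[fun ω => dualQ N x (X ω) (Λ ω)|MeasurableSpace.comap X inferInstance] =ᵐ[P] X :=
  dualQ_stationary_general P a b N x hmono hx0 hxN X hXmeas hXab Λ hΛmeas hΛ hindep
end

section
/- (Greek with respect to a notional weight.) Let n ≥ 1, α_i > 0 and p_i ∈ (0,1) for i = 1,…,n, K ∈ ℝ, l ∈ {1,…,n}, and let Z_1,…,Z_n be independent Bernoulli random variables with parameters p_i. Set S_{−l} := Σ_{i≠l} α_i Z_i and g(α) := E( S_{−l} + α Z_l − K )_+ for α > 0. If P(S_{−l} = K − α_l) = 0, then g is differentiable at α_l with g′(α_l) = p_l · P( S_{−l} ≥ K − α_l ). -/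
/-!
With `S = S_{−l}`, pathwise `a ↦ (S + a Z_l - K)_+` is 1-Lipschitz and, off the null event
`{S = K - α_l}`, differentiable at `α_l` with derivative `1{S ≥ K - α_l, Z_l = 1}`. Dominated
differentiation under the integral turns `g'(α_l)` into `P(S ≥ K - α_l, Z_l = 1)`, which factors as
`P(S ≥ K - α_l) · p_l` since `S` is independent of `Z_l`.
-/

open MeasureTheory ProbabilityTheory Filter

lemma hasDerivAt_max_zero {x : ℝ} (hx : x ≠ 0) :
    HasDerivAt (fun y : ℝ => max y 0) (if 0 < x then 1 else 0) x := by
  rcases hx.lt_or_gt with hneg | hpos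
  · rw [if_neg hneg.not_gt]
    refine (hasDerivAt_const x (0 : ℝ)).congr_of_eventuallyEq ?_
    filter_upwards [eventually_lt_nhds hneg] with y hy using max_eq_right hy.le
  · rw [if_pos hpos]
    refine (hasDerivAt_id x).congr_of_eventuallyEq ?_
    filter_upwards [eventually_gt_nhds hpos] with y hy using max_eq_left hy.le

lemma hasDerivAt_max_add_mul_sub_zero {s z K a₀ : ℝ} (hz : z = 0 ∨ z = 1) (hs : s ≠ K - a₀) :
    HasDerivAt (fun a => max (s + a * z - K) 0) (if K - a₀ ≤ s ∧ z = 1 then 1 else 0) a₀ := by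
  rcases hz with rfl | rfl
  · simpa using hasDerivAt_const a₀ (max (s - K) 0)
  · have hinner : HasDerivAt (fun a => s + a * 1 - K) 1 a₀ := by
      simpa using ((hasDerivAt_id a₀).const_add s).sub_const K
    have houter := hasDerivAt_max_zero (x := s + a₀ * 1 - K) (by contrapose! hs; linarith)
    have hiff : 0 < s + a₀ * 1 - K ↔ K - a₀ ≤ s :=
      ⟨fun h => by linarith, fun h => by linarith [lt_of_le_of_ne h hs.symm]⟩
    refine (houter.comp a₀ hinner).congr_deriv ?_
    simp only [hiff]
    simp

lemma lipschitzWith_max_add_mul_sub_zero {s z K : ℝ} (hz : |z| ≤ 1) :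
    LipschitzWith 1 (fun a => max (s + a * z - K) 0) := by
  have hlin : LipschitzWith 1 (fun a => s + a * z - K) := by
    refine LipschitzWith.of_dist_le_mul fun a b => ?_
    simp only [Real.dist_eq, NNReal.coe_one, one_mul]
    calc |s + a * z - K - (s + b * z - K)| = |a - b| * |z| := by rw [← abs_mul]; ring_nf
      _ ≤ |a - b| := mul_le_of_le_one_right (abs_nonneg _) hz
  exact hlin.max_const 0

section

variable {Ω : Type*} [MeasurableSpace Ω] {μ : Measure Ω}

lemma ProbabilityTheory.iIndepFun.indepFun_finsetSum_mul_of_notMem {ι : Type*}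
    {Z : ι → Ω → ℝ} (h : iIndepFun Z μ) (hZ : ∀ i, Measurable (Z i)) (c : ι → ℝ)
    {s : Finset ι} {l : ι} (hl : l ∉ s) :
    IndepFun (fun ω => ∑ i ∈ s, c i * Z i ω) (Z l) μ := by
  classical
  have hblocks := (h.indepFun_finset s {l} (Finset.disjoint_singleton_right.2 hl) hZ).comp
    (φ := fun x : s → ℝ => ∑ i : s, c i * x i)
    (ψ := fun x : ({l} : Finset ι) → ℝ => x ⟨l, Finset.mem_singleton_self l⟩)
    (by fun_prop) (measurable_pi_apply (X := fun _ : ({l} : Finset ι) => ℝ) _)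
  convert hblocks using 1
  · funext ω
    exact (Finset.sum_coe_sort s (fun i => c i * Z i ω)).symm
  · rfl

variable [IsFiniteMeasure μ]

lemma integrable_of_forall_eq_zero_or_eq_one {Z : Ω → ℝ} (hZ : Measurable Z)
    (hZ01 : ∀ ω, Z ω = 0 ∨ Z ω = 1) : Integrable Z μ :=
  .of_mem_Icc 0 1 hZ.aemeasurable <| ae_of_all _ fun ω => by rcases hZ01 ω with h | h <;> simp [h]

theorem hasDerivAt_integral_max_add_mul_sub_zero {S Z : Ω → ℝ} {K a₀ : ℝ}
    (hSm : Measurable S) (hS : Integrable S μ) (hZ : Measurable Z)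
    (hZ01 : ∀ ω, Z ω = 0 ∨ Z ω = 1) (hnull : μ {ω | S ω = K - a₀} = 0) :
    HasDerivAt (fun a => ∫ ω, max (S ω + a * Z ω - K) 0 ∂μ)
      (μ.real ({ω | K - a₀ ≤ S ω} ∩ {ω | Z ω = 1})) a₀ := by
  set A := {ω | K - a₀ ≤ S ω} ∩ {ω | Z ω = 1}
  have hA : MeasurableSet A :=
    (measurableSet_le measurable_const hSm).inter (hZ (measurableSet_singleton 1))
  have hint (a : ℝ) : Integrable (fun ω => max (S ω + a * Z ω - K) 0) μ :=
    ((hS.add ((integrable_of_forall_eq_zero_or_eq_one hZ hZ01).const_mul a)).sub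
      (integrable_const K)).pos_part
  have hlip (ω : Ω) :
      LipschitzOnWith (Real.nnabs 1) (fun a => max (S ω + a * Z ω - K) 0) .univ := by
    rw [map_one]
    refine (lipschitzWith_max_add_mul_sub_zero ?_).lipschitzOnWith
    rcases hZ01 ω with h | h <;> simp [h]
  have hdiff : ∀ᵐ ω ∂μ,
      HasDerivAt (fun a => max (S ω + a * Z ω - K) 0) (A.indicator 1 ω) a₀ := by
    filter_upwards [measure_eq_zero_iff_ae_notMem.1 hnull] with ω hω
    convert hasDerivAt_max_add_mul_sub_zero (hZ01 ω) hω using 1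
    simp [A, Set.indicator_apply]
  rw [← integral_indicator_one hA]
  exact (hasDerivAt_integral_of_dominated_loc_of_lip univ_mem
    (.of_forall fun a => (hint a).aestronglyMeasurable) (hint a₀)
    (measurable_const.indicator hA).aestronglyMeasurable (ae_of_all _ hlip)
    (integrable_const 1) hdiff).2

end

theorem greek_notional_weight_general {Ω : Type*} [MeasurableSpace Ω] (P : Measure Ω)
    [IsProbabilityMeasure P]
    (n : ℕ) (α p : ℕ → ℝ) (K : ℝ) (l : ℕ) (hl : l < n)
    (hp : ∀ i < n, p i ∈ Set.Ioo (0 : ℝ) 1)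
    (Z : ℕ → Ω → ℝ) (hZmeas : ∀ i, Measurable (Z i))
    (hZ01 : ∀ i < n, ∀ ω, Z i ω = 0 ∨ Z i ω = 1)
    (hZp : ∀ i < n, P {ω | Z i ω = 1} = ENNReal.ofReal (p i))
    (hindep : iIndepFun Z P)
    (hnull : P {ω | (∑ i ∈ (Finset.range n).erase l, α i * Z i ω) = K - α l} = 0) :
    HasDerivAt
      (fun a : ℝ => ∫ ω,
        max ((∑ i ∈ (Finset.range n).erase l, α i * Z i ω) + a * Z l ω - K) 0 ∂P)
      (p l * (P {ω | K - α l ≤ ∑ i ∈ (Finset.range n).erase l, α i * Z i ω}).toReal)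
      (α l) := by
  set S : Ω → ℝ := fun ω => ∑ i ∈ (Finset.range n).erase l, α i * Z i ω
  have hSm : Measurable S := by fun_prop
  have hS : Integrable S P := integrable_finsetSum _ fun i hi =>
    (integrable_of_forall_eq_zero_or_eq_one (hZmeas i)
      (hZ01 i (Finset.mem_range.1 (Finset.mem_of_mem_erase hi)))).const_mul (α i)
  have hindepS : IndepFun S (Z l) P :=
    hindep.indepFun_finsetSum_mul_of_notMem hZmeas α (Finset.notMem_erase l _)
  have hprod : P ({ω | K - α l ≤ S ω} ∩ {ω | Z l ω = 1})
      = P {ω | K - α l ≤ S ω} * ENNReal.ofReal (p l) := by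
    rw [← hZp l hl]
    exact hindepS.measure_inter_preimage_eq_mul (Set.Ici _) {1} measurableSet_Ici
      (measurableSet_singleton 1)
  refine (hasDerivAt_integral_max_add_mul_sub_zero hSm hS (hZmeas l) (hZ01 l hl)
    hnull).congr_deriv ?_
  rw [measureReal_def, hprod, ENNReal.toReal_mul, ENNReal.toReal_ofReal (hp l hl).1.le, mul_comm]

/-- **Greek with respect to a notional weight.** Let `n ≥ 1`, `α_i > 0`,
`p_i ∈ (0,1)`, `K ∈ ℝ`, `l < n`, and let `Z_0,…,Z_{n−1}` be independent Bernoulli(p_i) random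
variables. Set `S_{−l} := Σ_{i≠l} α_i Z_i` and `g(α) := E(S_{−l} + α Z_l − K)_+`.
If `P(S_{−l} = K − α_l) = 0`, then `g` is differentiable at `α_l` with
`g′(α_l) = p_l · P(S_{−l} ≥ K − α_l)`. -/
theorem greek_notional_weight {Ω : Type*} [MeasurableSpace Ω] (P : Measure Ω)
    [IsProbabilityMeasure P]
    (n : ℕ) (hn : 1 ≤ n) (α p : ℕ → ℝ) (K : ℝ) (l : ℕ) (hl : l < n)
    (hα : ∀ i < n, 0 < α i) (hp : ∀ i < n, p i ∈ Set.Ioo (0 : ℝ) 1)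
    (Z : ℕ → Ω → ℝ) (hZmeas : ∀ i, Measurable (Z i))
    (hZ01 : ∀ i < n, ∀ ω, Z i ω = 0 ∨ Z i ω = 1)
    (hZp : ∀ i < n, P {ω | Z i ω = 1} = ENNReal.ofReal (p i))
    (hindep : iIndepFun Z P)
    (hnull : P {ω | (∑ i ∈ (Finset.range n).erase l, α i * Z i ω) = K - α l} = 0) :
    HasDerivAt
      (fun a : ℝ => ∫ ω,
        max ((∑ i ∈ (Finset.range n).erase l, α i * Z i ω) + a * Z l ω - K) 0 ∂P)
      (p l * (P {ω | K - α l ≤ ∑ i ∈ (Finset.range n).erase l, α i * Z i ω}).toReal)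
      (α l) :=
  greek_notional_weight_general P n α p K l hl hp Z hZmeas hZ01 hZp hindep hnull
end
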